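/- Fix τ > 0, a rank tuple r = (r₁,…,r_d), and a sparsity tuple s = (s₁,…,s_d). For a = 1, 2, let S⁽ᵃ⁾ ∈ ℝ^{r₁×⋯×r_d} with ‖S⁽ᵃ⁾‖₁ ≤ τ and let U_i⁽ᵃ⁾ ∈ ℝ^{n_i×r_i} (i = 1,…,d) be matrices each of whose columns has at most s_i nonzero entries and ℓ2 norm at most 1. Then ‖S⁽¹⁾ ×₁ U₁⁽¹⁾ ⋯ ×_d U_d⁽¹⁾ − S⁽²⁾ ×₁ U₁⁽²⁾ ⋯ ×_d U_d⁽²⁾‖_F ≤ τ(d+1) · max{ max_{i∈{1,…,d}} max_{j∈{1,…,r_i}} ‖U_i⁽¹⁾(:,j) − U_i⁽²⁾(:,j)‖₂, (1/τ)·‖S⁽¹⁾ − S⁽²⁾‖₁ }; that is, the Tucker-product map Φ(S, U₁,…,U_d) = S ×₁ U₁ ⋯ ×_d U_d is Lipschitz with constant τ(d+1) from the product metric h_P to the Frobenius-norm metric. -/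

import Mathlib

open scoped BigOperators

noncomputable section

/-- Frobenius (ℓ2) norm of a finitely-indexed real array. -/
def frob {ι : Type*} [Fintype ι] (Z : ι → ℝ) : ℝ :=
  Real.sqrt (∑ x, (Z x) ^ 2)

/-- ℓ1 norm of a finitely-indexed real array. -/
def l1 {ι : Type*} [Fintype ι] (Z : ι → ℝ) : ℝ :=
  ∑ x, |Z x|

/-- Tucker product `S ×₁ U₁ ×₂ U₂ ⋯ ×_d U_d`. -/
def tucker {d : ℕ} {n r : Fin d → ℕ} (S : (∀ i, Fin (r i)) → ℝ)
    (U : ∀ i, Fin (n i) → Fin (r i) → ℝ) : (∀ i, Fin (n i)) → ℝ :=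
  fun x => ∑ k : ∀ i, Fin (r i), S k * ∏ i, U i (x i) (k i)

/-- The set `G_{r,s,τ}` of `r`-rank, `s`-sparse tensors whose core has ℓ1 norm at most `τ`
and whose factor-matrix columns have at most `sᵢ` nonzero entries and ℓ2 norm at most 1. -/
def Gset {d : ℕ} (n r s : Fin d → ℕ) (τ : ℝ) : Set ((∀ i, Fin (n i)) → ℝ) :=
  { Z | ∃ (S : (∀ i, Fin (r i)) → ℝ) (U : ∀ i, Fin (n i) → Fin (r i) → ℝ),
      l1 S ≤ τ ∧
      (∀ i j, (Function.support fun a => U i a j).ncard ≤ s i) ∧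
      (∀ i j, Real.sqrt (∑ a, (U i a j) ^ 2) ≤ 1) ∧
      Z = tucker S U }

/-! The Tucker map is linear in the core and in each factor matrix. Replacing the core and
then the `d` factor matrices one at a time, each step changes the tensor by a Tucker product
in which a single slot is a difference (`S₁ - S₂`, or `U₁ᵢ - U₂ᵢ`) and every other slot has
columns of norm at most 1. Expanding such a product as a sum of rank-one tensors, the Frobenius
norm of each is the product of the column norms, so each step costs at most `τ · h_P`. -/

open Finset

section Frobenius

variable {ι : Type*} [Fintype ι]

lemma frob_eq_norm_toLp (Z : ι → ℝ) : frob Z = ‖WithLp.toLp 2 Z‖ := by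
  simp [frob, EuclideanSpace.norm_eq, sq_abs]

lemma frob_nonneg (Z : ι → ℝ) : 0 ≤ frob Z :=
  Real.sqrt_nonneg _

lemma frob_sub_le_add (A B C : ι → ℝ) : frob (A - C) ≤ frob (A - B) + frob (B - C) := by
  simpa [frob_eq_norm_toLp] using norm_sub_le_norm_sub_add_norm_sub
    (WithLp.toLp 2 A) (WithLp.toLp 2 B) (WithLp.toLp 2 C)

lemma frob_sum_le {κ : Type*} (s : Finset κ) (g : κ → ι → ℝ) :
    frob (∑ k ∈ s, g k) ≤ ∑ k ∈ s, frob (g k) := by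
  simpa [frob_eq_norm_toLp, WithLp.toLp_sum] using norm_sum_le s fun k => WithLp.toLp 2 (g k)

lemma frob_smul (c : ℝ) (Z : ι → ℝ) : frob (c • Z) = |c| * frob Z := by
  simpa [frob_eq_norm_toLp] using norm_smul c (WithLp.toLp 2 Z)

lemma frob_outer_prod [DecidableEq ι] {κ : ι → Type*} [∀ i, Fintype (κ i)]
    (f : ∀ i, κ i → ℝ) :
    frob (fun x : ∀ i, κ i => ∏ i, f i (x i)) = ∏ i, frob (f i) := by
  simp only [frob, ← Finset.prod_pow]
  rw [← Fintype.prod_sum fun i a => f i a ^ 2]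
  exact Real.sqrt_prod _ fun i _ => Finset.sum_nonneg fun a _ => sq_nonneg _

end Frobenius

section Tucker

variable {d : ℕ} {n r : Fin d → ℕ}

lemma tucker_sub_left (S₁ S₂ : (∀ i, Fin (r i)) → ℝ) (U : ∀ i, Fin (n i) → Fin (r i) → ℝ) :
    tucker (S₁ - S₂) U = tucker S₁ U - tucker S₂ U := by
  ext x
  simp [tucker, sub_mul]

lemma prod_update_apply (U : ∀ i, Fin (n i) → Fin (r i) → ℝ) (m : Fin d)
    (A : Fin (n m) → Fin (r m) → ℝ) (x : ∀ i, Fin (n i)) (k : ∀ i, Fin (r i)) :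
    ∏ i, Function.update U m A i (x i) (k i) =
      A (x m) (k m) * ∏ i ∈ univ.erase m, U i (x i) (k i) := by
  rw [← Finset.mul_prod_erase univ _ (mem_univ m), Function.update_self]
  congr 1
  exact Finset.prod_congr rfl fun i hi => by rw [Function.update_of_ne (ne_of_mem_erase hi)]

lemma tucker_update_sub (S : (∀ i, Fin (r i)) → ℝ) (U : ∀ i, Fin (n i) → Fin (r i) → ℝ)
    (m : Fin d) (A B : Fin (n m) → Fin (r m) → ℝ) :
    tucker S (Function.update U m (A - B)) =
      tucker S (Function.update U m A) - tucker S (Function.update U m B) := by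
  ext x
  simp only [tucker, Pi.sub_apply, ← Finset.sum_sub_distrib, prod_update_apply]
  exact Finset.sum_congr rfl fun k _ => by ring

lemma frob_tucker_le (S : (∀ i, Fin (r i)) → ℝ) (U : ∀ i, Fin (n i) → Fin (r i) → ℝ)
    (c : Fin d → ℝ) (hU : ∀ i j, frob (fun a => U i a j) ≤ c i) :
    frob (tucker S U) ≤ l1 S * ∏ i, c i := by
  have hsum : tucker S U = ∑ k, S k • fun x => ∏ i, U i (x i) (k i) := by
    ext x
    simp [tucker]
  rw [hsum, l1, Finset.sum_mul]
  refine (frob_sum_le _ _).trans (Finset.sum_le_sum fun k _ => ?_)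
  rw [frob_smul, frob_outer_prod fun i a => U i a (k i)]
  exact mul_le_mul_of_nonneg_left
    (Finset.prod_le_prod (fun i _ => frob_nonneg _) fun i _ => hU i (k i)) (abs_nonneg _)

lemma frob_tucker_sub_tucker_le (S : (∀ i, Fin (r i)) → ℝ)
    (U U' : ∀ i, Fin (n i) → Fin (r i) → ℝ) {δ : ℝ}
    (hU : ∀ i j, frob (fun a => U i a j) ≤ 1) (hU' : ∀ i j, frob (fun a => U' i a j) ≤ 1)
    (hδ : ∀ i j, frob (fun a => U i a j - U' i a j) ≤ δ) :
    frob (tucker S U - tucker S U') ≤ d * (l1 S * δ) := by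
  classical
  suffices h : ∀ s : Finset (Fin d),
      frob (tucker S U - tucker S (s.piecewise U' U)) ≤ #s * (l1 S * δ) by
    simpa using h univ
  intro s
  induction s using Finset.induction_on with
  | empty => simp [frob]
  | insert m s hm ih =>
    set P := s.piecewise U' U
    have hP : tucker S P = tucker S (Function.update P m (U m)) := by
      rw [← piecewise_eq_of_notMem s U' U hm, Function.update_eq_self]
    have hcol : ∀ i j, frob (fun a => Function.update P m (U m - U' m) i a j) ≤
        (Pi.mulSingle m δ : Fin d → ℝ) i := by
      intro i j
      rcases eq_or_ne i m with rfl | hi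
      · simpa using hδ i j
      · rw [Function.update_of_ne hi, Pi.mulSingle_eq_of_ne hi]
        exact piecewise_cases s U' U (fun V => frob (fun a => V a j) ≤ 1) (hU' i j) (hU i j)
    have hstep : frob (tucker S P - tucker S (Function.update P m (U' m))) ≤ l1 S * δ := by
      rw [hP, ← tucker_update_sub]
      simpa using frob_tucker_le S _ _ hcol
    rw [piecewise_insert, card_insert_of_notMem hm]
    calc _ ≤ _ := frob_sub_le_add _ (tucker S P) _
      _ ≤ #s * (l1 S * δ) + l1 S * δ := add_le_add ih hstep
      _ = _ := by push_cast; ring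

end Tucker

theorem tucker_lipschitz_general
    {d : ℕ} {n r : Fin d → ℕ}
    (s : Fin d → ℕ) {τ : ℝ} (hτ : 0 < τ)
    (S1 S2 : (∀ i, Fin (r i)) → ℝ) (hS2 : l1 S2 ≤ τ)
    (U1 U2 : ∀ i, Fin (n i) → Fin (r i) → ℝ)
    (hU1 : ∀ i j, (Function.support fun a => U1 i a j).ncard ≤ s i ∧
      Real.sqrt (∑ a, (U1 i a j) ^ 2) ≤ 1)
    (hU2 : ∀ i j, (Function.support fun a => U2 i a j).ncard ≤ s i ∧
      Real.sqrt (∑ a, (U2 i a j) ^ 2) ≤ 1) :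
    frob (tucker S1 U1 - tucker S2 U2) ≤
      τ * (d + 1) *
        max (⨆ i : Fin d, ⨆ j : Fin (r i), Real.sqrt (∑ a, (U1 i a j - U2 i a j) ^ 2))
          ((1 / τ) * l1 (S1 - S2)) := by
  set M := max (⨆ i : Fin d, ⨆ j : Fin (r i), Real.sqrt (∑ a, (U1 i a j - U2 i a j) ^ 2))
    ((1 / τ) * l1 (S1 - S2))
  have hcol : ∀ i j, frob (fun a => U1 i a j - U2 i a j) ≤ M := fun i j =>
    ((le_ciSup (f := fun j => frob fun a => U1 i a j - U2 i a j)
        (Finite.bddAbove_range _) j).trans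
      (le_ciSup (f := fun i => ⨆ j, frob fun a => U1 i a j - U2 i a j)
        (Finite.bddAbove_range _) i)).trans (le_max_left _ _)
  have hM : 0 ≤ M :=
    (Real.iSup_nonneg fun i => Real.iSup_nonneg fun j => frob_nonneg _).trans (le_max_left _ _)
  have hcore : frob (tucker S1 U1 - tucker S2 U1) ≤ τ * M := by
    rw [← tucker_sub_left]
    calc _ ≤ l1 (S1 - S2) * 1 := by simpa using frob_tucker_le _ U1 1 fun i j => (hU1 i j).2
      _ = τ * ((1 / τ) * l1 (S1 - S2)) := by field_simp
      _ ≤ τ * M := mul_le_mul_of_nonneg_left (le_max_right _ _) hτ.le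
  have hfactors : frob (tucker S2 U1 - tucker S2 U2) ≤ d * (τ * M) :=
    (frob_tucker_sub_tucker_le S2 U1 U2 (fun i j => (hU1 i j).2) (fun i j => (hU2 i j).2)
      hcol).trans (by gcongr)
  calc _ ≤ _ := frob_sub_le_add _ (tucker S2 U1) _
    _ ≤ τ * M + d * (τ * M) := add_le_add hcore hfactors
    _ = τ * (d + 1) * M := by ring

/-- Lemma 5.7: the Tucker-product map is Lipschitz with constant `τ(d+1)`
from the product metric to the Frobenius metric. -/
theorem tucker_lipschitz
    {d : ℕ} (hd : 0 < d) {n r : Fin d → ℕ} (hr : ∀ i, 0 < r i)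
    (s : Fin d → ℕ) {τ : ℝ} (hτ : 0 < τ)
    (S1 S2 : (∀ i, Fin (r i)) → ℝ) (hS1 : l1 S1 ≤ τ) (hS2 : l1 S2 ≤ τ)
    (U1 U2 : ∀ i, Fin (n i) → Fin (r i) → ℝ)
    (hU1 : ∀ i j, (Function.support fun a => U1 i a j).ncard ≤ s i ∧
      Real.sqrt (∑ a, (U1 i a j) ^ 2) ≤ 1)
    (hU2 : ∀ i j, (Function.support fun a => U2 i a j).ncard ≤ s i ∧
      Real.sqrt (∑ a, (U2 i a j) ^ 2) ≤ 1) :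
    frob (tucker S1 U1 - tucker S2 U2) ≤
      τ * (d + 1) *
        max (⨆ i : Fin d, ⨆ j : Fin (r i), Real.sqrt (∑ a, (U1 i a j - U2 i a j) ^ 2))
          ((1 / τ) * l1 (S1 - S2)) :=
  tucker_lipschitz_general s hτ S1 S2 hS2 U1 U2 hU1 hU2
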